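/- Equivalence of the two forms of the dynamical Yang–Baxter equation: let γ ∈ ℂ and let R(λ,x) be an End(ℂ^N⊗ℂ^N)-valued function (λ ∈ ℂ a parameter, x ∈ ℂ^N) whose entries satisfy (a) the zero-weight condition R_{(ij),(kl)}(λ,x) = 0 unless δ_i+δ_j = δ_k+δ_l, and (b) the translation condition R_{(ij),(kl)}(λ, x + t(δ_i+δ_j)) = R_{(ij),(kl)}(λ, x) for all t ∈ ℂ. Then the following two statements are equivalent, for all λ_1,λ_2,λ_3 and x (with λ_{ab} = λ_a−λ_b): (1) the Gervais–Neveu–Felder equation R_{12}(λ_{12}, x+γh^{(3)}) R_{13}(λ_{13}, x−γh^{(2)}) R_{23}(λ_{23}, x+γh^{(1)}) = R_{23}(λ_{23}, x−γh^{(1)}) R_{13}(λ_{13}, x+γh^{(2)}) R_{12}(λ_{12}, x−γh^{(3)}); (2) the unsymmetrized shifted Yang–Baxter equation R_{12}(λ_{12}, x) R_{13}(λ_{13}, x−2γh^{(2)}) R_{23}(λ_{23}, x) = R_{23}(λ_{23}, x−2γh^{(1)}) R_{13}(λ_{13}, x) R_{12}(λ_{12}, x−2γh^{(3)}). -/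
import Mathlib


/- STATEMENT 10: Equivalence of the two forms of the dynamical Yang–Baxter
   equation, for R satisfying the zero-weight and translation conditions:
   the Gervais–Neveu–Felder equation holds for all λ's and x iff the
   unsymmetrized shifted Yang–Baxter equation does. -/

noncomputable section
open Matrix Complex
open scoped Kronecker BigOperators

variable (N : ℕ)

/-- S placed in factors 1,2 of (ℂ^N)^{⊗3}, argument shifted by s·h^{(3)}
    (acting as S(x + s·δ_k) on index k in factor 3) -/
def sh12 (S : (Fin N → ℂ) → Matrix (Fin N × Fin N) (Fin N × Fin N) ℂ)
    (x : Fin N → ℂ) (s : ℂ) :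
    Matrix (Fin N × Fin N × Fin N) (Fin N × Fin N × Fin N) ℂ :=
  fun p q => if p.2.2 = q.2.2 then
    S (x + s • (Pi.single q.2.2 1 : Fin N → ℂ)) (p.1, p.2.1) (q.1, q.2.1) else 0

def sh13 (S : (Fin N → ℂ) → Matrix (Fin N × Fin N) (Fin N × Fin N) ℂ)
    (x : Fin N → ℂ) (s : ℂ) :
    Matrix (Fin N × Fin N × Fin N) (Fin N × Fin N × Fin N) ℂ :=
  fun p q => if p.2.1 = q.2.1 then
    S (x + s • (Pi.single q.2.1 1 : Fin N → ℂ)) (p.1, p.2.2) (q.1, q.2.2) else 0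

def sh23 (S : (Fin N → ℂ) → Matrix (Fin N × Fin N) (Fin N × Fin N) ℂ)
    (x : Fin N → ℂ) (s : ℂ) :
    Matrix (Fin N × Fin N × Fin N) (Fin N × Fin N × Fin N) ℂ :=
  fun p q => if p.1 = q.1 then
    S (x + s • (Pi.single q.1 1 : Fin N → ℂ)) (p.2.1, p.2.2) (q.2.1, q.2.2) else 0

namespace DYBEaux

def wt {N : ℕ} (p : Fin N × Fin N × Fin N) : Fin N → ℂ :=
  Pi.single p.1 1 + Pi.single p.2.1 1 + Pi.single p.2.2 1

lemma mul3_apply {n : Type*} [Fintype n]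
    (A B C : Matrix n n ℂ) (p q : n) :
    (A * B * C) p q = ∑ j, ∑ i, A p i * B i j * C j q := by
  simp [Matrix.mul_apply, Finset.sum_mul]

variable {N : ℕ} (γ : ℂ) (R : ℂ → (Fin N → ℂ) → Matrix (Fin N × Fin N) (Fin N × Fin N) ℂ)

lemma keyR
    (htr : ∀ lam : ℂ, ∀ x : Fin N → ℂ, ∀ t : ℂ, ∀ i j k l : Fin N,
      R lam (x + t • ((Pi.single i 1 : Fin N → ℂ) + Pi.single j 1)) (i, j) (k, l) =
        R lam x (i, j) (k, l))
    (lam : ℂ) (y y' : Fin N → ℂ) (i j k l : Fin N)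
    (h : y' = y + γ • ((Pi.single i 1 : Fin N → ℂ) + Pi.single j 1)) :
    R lam y' (i, j) (k, l) = R lam y (i, j) (k, l) := by
  rw [h]; exact htr lam y γ i j k l

lemma lemA
    (hzw : ∀ lam : ℂ, ∀ x : Fin N → ℂ, ∀ i j k l : Fin N,
      (Pi.single i 1 : Fin N → ℂ) + Pi.single j 1 ≠
        (Pi.single k 1 : Fin N → ℂ) + Pi.single l 1 →
      R lam x (i, j) (k, l) = 0)
    (htr : ∀ lam : ℂ, ∀ x : Fin N → ℂ, ∀ t : ℂ, ∀ i j k l : Fin N,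
      R lam (x + t • ((Pi.single i 1 : Fin N → ℂ) + Pi.single j 1)) (i, j) (k, l) =
        R lam x (i, j) (k, l))
    (l12 l13 l23 : ℂ) (x : Fin N → ℂ) (p q : Fin N × Fin N × Fin N) :
    (sh12 N (R l12) x γ * sh13 N (R l13) x (-γ) * sh23 N (R l23) x γ) p q =
    (sh12 N (R l12) (x + γ • wt p) 0 * sh13 N (R l13) (x + γ • wt p) (-(2*γ)) *
      sh23 N (R l23) (x + γ • wt p) 0) p q := by
  obtain ⟨p1, p2, p3⟩ := p
  obtain ⟨q1, q2, q3⟩ := q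
  rw [mul3_apply, mul3_apply]
  refine Finset.sum_congr rfl fun j _ => Finset.sum_congr rfl fun i _ => ?_
  obtain ⟨a, b, c⟩ := i
  obtain ⟨d, e, f⟩ := j
  simp only [sh12, sh13, sh23, wt]
  split_ifs with hc hb hd <;> try ring1
  subst hc; subst hb; subst hd
  by_cases h1 : (Pi.single p1 1 : Fin N → ℂ) + Pi.single p2 1 = Pi.single a 1 + Pi.single b 1
  · by_cases h2 : (Pi.single a 1 : Fin N → ℂ) + Pi.single p3 1 = Pi.single d 1 + Pi.single f 1
    · have E1 : R l12 (x + γ • (Pi.single p1 1 + Pi.single p2 1 + Pi.single p3 1)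
          + (0:ℂ) • (Pi.single p3 1 : Fin N → ℂ)) (p1, p2) (a, b)
          = R l12 (x + γ • (Pi.single p3 1 : Fin N → ℂ)) (p1, p2) (a, b) :=
        keyR γ R htr l12 _ _ p1 p2 a b (by module)
      have E2 : R l13 (x + γ • (Pi.single p1 1 + Pi.single p2 1 + Pi.single p3 1)
          + (-(2*γ)) • (Pi.single b 1 : Fin N → ℂ)) (a, p3) (d, f)
          = R l13 (x + (-γ) • (Pi.single b 1 : Fin N → ℂ)) (a, p3) (d, f) :=
        keyR γ R htr l13 _ _ a p3 d f (by rw [h1]; module)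
      have E3 : R l23 (x + γ • (Pi.single p1 1 + Pi.single p2 1 + Pi.single p3 1)
          + (0:ℂ) • (Pi.single d 1 : Fin N → ℂ)) (b, f) (q2, q3)
          = R l23 (x + γ • (Pi.single d 1 : Fin N → ℂ)) (b, f) (q2, q3) :=
        keyR γ R htr l23 _ _ b f q2 q3 (by
          funext u
          have h1' := congrFun h1 u
          have h2' := congrFun h2 u
          simp only [Pi.add_apply, Pi.smul_apply, smul_eq_mul] at h1' h2' ⊢
          linear_combination γ * h1' + γ * h2')
      rw [E1, E2, E3]
    · rw [hzw _ _ _ _ _ _ h2, hzw _ _ _ _ _ _ h2]; ring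
  · rw [hzw _ _ _ _ _ _ h1, hzw _ _ _ _ _ _ h1]; ring


lemma lemB
    (hzw : ∀ lam : ℂ, ∀ x : Fin N → ℂ, ∀ i j k l : Fin N,
      (Pi.single i 1 : Fin N → ℂ) + Pi.single j 1 ≠
        (Pi.single k 1 : Fin N → ℂ) + Pi.single l 1 →
      R lam x (i, j) (k, l) = 0)
    (htr : ∀ lam : ℂ, ∀ x : Fin N → ℂ, ∀ t : ℂ, ∀ i j k l : Fin N,
      R lam (x + t • ((Pi.single i 1 : Fin N → ℂ) + Pi.single j 1)) (i, j) (k, l) =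
        R lam x (i, j) (k, l))
    (l12 l13 l23 : ℂ) (x : Fin N → ℂ) (p q : Fin N × Fin N × Fin N) :
    (sh23 N (R l23) x (-γ) * sh13 N (R l13) x γ * sh12 N (R l12) x (-γ)) p q =
    (sh23 N (R l23) (x + γ • wt q) (-(2*γ)) * sh13 N (R l13) (x + γ • wt q) 0 *
      sh12 N (R l12) (x + γ • wt q) (-(2*γ))) p q := by
  obtain ⟨p1, p2, p3⟩ := p
  obtain ⟨q1, q2, q3⟩ := q
  rw [mul3_apply, mul3_apply]
  refine Finset.sum_congr rfl fun j _ => Finset.sum_congr rfl fun i _ => ?_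
  obtain ⟨a, b, c⟩ := i
  obtain ⟨d, e, f⟩ := j
  simp only [sh12, sh13, sh23, wt]
  split_ifs with ha hb hf <;> try ring1
  subst ha; subst hb; subst hf
  by_cases h3 : (Pi.single d 1 : Fin N → ℂ) + Pi.single b 1 = Pi.single q1 1 + Pi.single q2 1
  · by_cases h2 : (Pi.single p1 1 : Fin N → ℂ) + Pi.single c 1 = Pi.single d 1 + Pi.single f 1
    · by_cases h1 : (Pi.single p2 1 : Fin N → ℂ) + Pi.single p3 1 = Pi.single b 1 + Pi.single c 1
      · have E1 : R l23 (x + γ • (Pi.single q1 1 + Pi.single q2 1 + Pi.single f 1)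
            + (-(2*γ)) • (Pi.single p1 1 : Fin N → ℂ)) (p2, p3) (b, c)
            = R l23 (x + (-γ) • (Pi.single p1 1 : Fin N → ℂ)) (p2, p3) (b, c) :=
          keyR γ R htr l23 _ _ p2 p3 b c (by
            funext u
            have h1' := congrFun h1 u
            have h2' := congrFun h2 u
            have h3' := congrFun h3 u
            simp only [Pi.add_apply, Pi.smul_apply, smul_eq_mul] at h1' h2' h3' ⊢
            linear_combination (-γ) * h1' + (-γ) * h2' + (-γ) * h3')
        have E2 : R l13 (x + γ • (Pi.single q1 1 + Pi.single q2 1 + Pi.single f 1)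
            + (0:ℂ) • (Pi.single b 1 : Fin N → ℂ)) (p1, c) (d, f)
            = R l13 (x + γ • (Pi.single b 1 : Fin N → ℂ)) (p1, c) (d, f) :=
          keyR γ R htr l13 _ _ p1 c d f (by
            funext u
            have h2' := congrFun h2 u
            have h3' := congrFun h3 u
            simp only [Pi.add_apply, Pi.smul_apply, smul_eq_mul] at h2' h3' ⊢
            linear_combination (-γ) * h2' + (-γ) * h3')
        have E3 : R l12 (x + γ • (Pi.single q1 1 + Pi.single q2 1 + Pi.single f 1)
            + (-(2*γ)) • (Pi.single f 1 : Fin N → ℂ)) (d, b) (q1, q2)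
            = R l12 (x + (-γ) • (Pi.single f 1 : Fin N → ℂ)) (d, b) (q1, q2) :=
          keyR γ R htr l12 _ _ d b q1 q2 (by rw [← h3]; module)
        rw [E1, E2, E3]
      · rw [hzw _ _ _ _ _ _ h1, hzw _ _ _ _ _ _ h1]; ring1
    · rw [hzw _ _ _ _ _ _ h2, hzw _ _ _ _ _ _ h2]; ring1
  · rw [hzw _ _ _ _ _ _ h3, hzw _ _ _ _ _ _ h3]; ring1

lemma lemCL
    (hzw : ∀ lam : ℂ, ∀ x : Fin N → ℂ, ∀ i j k l : Fin N,
      (Pi.single i 1 : Fin N → ℂ) + Pi.single j 1 ≠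
        (Pi.single k 1 : Fin N → ℂ) + Pi.single l 1 →
      R lam x (i, j) (k, l) = 0)
    (l12 l13 l23 s1 s2 s3 : ℂ) (x : Fin N → ℂ) (p q : Fin N × Fin N × Fin N)
    (hw : wt p ≠ wt q) :
    (sh12 N (R l12) x s1 * sh13 N (R l13) x s2 * sh23 N (R l23) x s3) p q = 0 := by
  obtain ⟨p1, p2, p3⟩ := p
  obtain ⟨q1, q2, q3⟩ := q
  rw [mul3_apply]
  refine Finset.sum_eq_zero fun j _ => Finset.sum_eq_zero fun i _ => ?_
  obtain ⟨a, b, c⟩ := i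
  obtain ⟨d, e, f⟩ := j
  simp only [sh12, sh13, sh23]
  split_ifs with hc hb hd <;> try ring1
  subst hc; subst hb; subst hd
  by_cases h1 : (Pi.single p1 1 : Fin N → ℂ) + Pi.single p2 1 = Pi.single a 1 + Pi.single b 1
  · by_cases h2 : (Pi.single a 1 : Fin N → ℂ) + Pi.single p3 1 = Pi.single d 1 + Pi.single f 1
    · by_cases h3 : (Pi.single b 1 : Fin N → ℂ) + Pi.single f 1 = Pi.single q2 1 + Pi.single q3 1
      · exfalso
        apply hw
        funext u
        have h1' := congrFun h1 u
        have h2' := congrFun h2 u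
        have h3' := congrFun h3 u
        simp only [wt, Pi.add_apply] at h1' h2' h3' ⊢
        linear_combination h1' + h2' + h3'
      · rw [hzw _ _ _ _ _ _ h3]; ring1
    · rw [hzw _ _ _ _ _ _ h2]; ring1
  · rw [hzw _ _ _ _ _ _ h1]; ring1

lemma lemCR
    (hzw : ∀ lam : ℂ, ∀ x : Fin N → ℂ, ∀ i j k l : Fin N,
      (Pi.single i 1 : Fin N → ℂ) + Pi.single j 1 ≠
        (Pi.single k 1 : Fin N → ℂ) + Pi.single l 1 →
      R lam x (i, j) (k, l) = 0)
    (l12 l13 l23 s1 s2 s3 : ℂ) (x : Fin N → ℂ) (p q : Fin N × Fin N × Fin N)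
    (hw : wt p ≠ wt q) :
    (sh23 N (R l23) x s3 * sh13 N (R l13) x s2 * sh12 N (R l12) x s1) p q = 0 := by
  obtain ⟨p1, p2, p3⟩ := p
  obtain ⟨q1, q2, q3⟩ := q
  rw [mul3_apply]
  refine Finset.sum_eq_zero fun j _ => Finset.sum_eq_zero fun i _ => ?_
  obtain ⟨a, b, c⟩ := i
  obtain ⟨d, e, f⟩ := j
  simp only [sh12, sh13, sh23]
  split_ifs with ha hb hf <;> try ring1
  subst ha; subst hb; subst hf
  by_cases h1 : (Pi.single p2 1 : Fin N → ℂ) + Pi.single p3 1 = Pi.single b 1 + Pi.single c 1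
  · by_cases h2 : (Pi.single p1 1 : Fin N → ℂ) + Pi.single c 1 = Pi.single d 1 + Pi.single f 1
    · by_cases h3 : (Pi.single d 1 : Fin N → ℂ) + Pi.single b 1 = Pi.single q1 1 + Pi.single q2 1
      · exfalso
        apply hw
        funext u
        have h1' := congrFun h1 u
        have h2' := congrFun h2 u
        have h3' := congrFun h3 u
        simp only [wt, Pi.add_apply] at h1' h2' h3' ⊢
        linear_combination h1' + h2' + h3'
      · rw [hzw _ _ _ _ _ _ h3]; ring1
    · rw [hzw _ _ _ _ _ _ h2]; ring1
  · rw [hzw _ _ _ _ _ _ h1]; ring1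

end DYBEaux

theorem GNF_iff_unsymmetrized (hN : 2 ≤ N) (γ : ℂ)
    (R : ℂ → (Fin N → ℂ) → Matrix (Fin N × Fin N) (Fin N × Fin N) ℂ)
    -- (a) zero-weight condition
    (hzw : ∀ lam : ℂ, ∀ x : Fin N → ℂ, ∀ i j k l : Fin N,
      (Pi.single i 1 : Fin N → ℂ) + Pi.single j 1 ≠
        (Pi.single k 1 : Fin N → ℂ) + Pi.single l 1 →
      R lam x (i, j) (k, l) = 0)
    -- (b) translation condition
    (htr : ∀ lam : ℂ, ∀ x : Fin N → ℂ, ∀ t : ℂ, ∀ i j k l : Fin N,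
      R lam (x + t • ((Pi.single i 1 : Fin N → ℂ) + Pi.single j 1)) (i, j) (k, l) =
        R lam x (i, j) (k, l)) :
    -- (1) the Gervais–Neveu–Felder equation
    (∀ lam₁ lam₂ lam₃ : ℂ, ∀ x : Fin N → ℂ,
      sh12 N (R (lam₁ - lam₂)) x γ * sh13 N (R (lam₁ - lam₃)) x (-γ) *
        sh23 N (R (lam₂ - lam₃)) x γ =
      sh23 N (R (lam₂ - lam₃)) x (-γ) * sh13 N (R (lam₁ - lam₃)) x γ *
        sh12 N (R (lam₁ - lam₂)) x (-γ))
    ↔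
    -- (2) the unsymmetrized shifted Yang–Baxter equation
    (∀ lam₁ lam₂ lam₃ : ℂ, ∀ x : Fin N → ℂ,
      sh12 N (R (lam₁ - lam₂)) x 0 * sh13 N (R (lam₁ - lam₃)) x (-(2*γ)) *
        sh23 N (R (lam₂ - lam₃)) x 0 =
      sh23 N (R (lam₂ - lam₃)) x (-(2*γ)) * sh13 N (R (lam₁ - lam₃)) x 0 *
        sh12 N (R (lam₁ - lam₂)) x (-(2*γ))) := by
  constructor
  · intro h l1 l2 l3 y
    refine Matrix.ext fun p q => ?_
    by_cases hw : DYBEaux.wt p = DYBEaux.wt q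
    · have hA := DYBEaux.lemA γ R hzw htr (l1 - l2) (l1 - l3) (l2 - l3)
        (y - γ • DYBEaux.wt p) p q
      have hB := DYBEaux.lemB γ R hzw htr (l1 - l2) (l1 - l3) (l2 - l3)
        (y - γ • DYBEaux.wt p) p q
      have hx : y - γ • DYBEaux.wt p + γ • DYBEaux.wt p = y := by abel
      rw [hx] at hA
      rw [← hw, hx] at hB
      have h0 := congrFun (congrFun (h l1 l2 l3 (y - γ • DYBEaux.wt p)) p) q
      rw [hA, hB] at h0
      exact h0
    · rw [DYBEaux.lemCL R hzw _ _ _ _ _ _ y p q hw,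
        DYBEaux.lemCR R hzw _ _ _ _ _ _ y p q hw]
  · intro h l1 l2 l3 y
    refine Matrix.ext fun p q => ?_
    by_cases hw : DYBEaux.wt p = DYBEaux.wt q
    · have hA := DYBEaux.lemA γ R hzw htr (l1 - l2) (l1 - l3) (l2 - l3) y p q
      have hB := DYBEaux.lemB γ R hzw htr (l1 - l2) (l1 - l3) (l2 - l3) y p q
      rw [← hw] at hB
      have h0 := congrFun (congrFun (h l1 l2 l3 (y + γ • DYBEaux.wt p)) p) q
      rw [hA, hB, h0]
    · rw [DYBEaux.lemCL R hzw _ _ _ _ _ _ y p q hw,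
        DYBEaux.lemCR R hzw _ _ _ _ _ _ y p q hw]
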